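/- arXiv:2402.04462 — 3 statements merged into one kernel-verified Lean document; each statement's English description precedes it below -/
import Mathlib

section
/- Let u, x : Fin m → K satisfy F(u) = 0 and F(x) = 0. Then for all s, t ∈ K one has F(s•u + t•x) = s*t*( s*(∇F(u)·x) + t*(∇F(x)·u) ). (This is the cubic-polarization identity underlying the analysis of the intersection of the cubic X = {F=0} with the line through [u] and [x]: X cuts out on that line the divisor [u] + [x] + [y] with third point y determined by the two directional derivatives.) -/
/-!
The restriction of a cubic form to the plane spanned by `u` and `x` is a binary cubic in `(s, t)`
whose `s³` and `t³` coefficients are `F(u)` and `F(x)` and whose mixed coefficients are the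
directional derivatives. Both sides are additive in `F`, so this only has to be checked on a
cubic monomial `r XᵢXⱼXₖ`, where it is the expansion of `∏ (s uₗ + t xₗ)` over `l ∈ {i, j, k}`.
-/

namespace MvPolynomial

variable {σ R : Type*} [CommRing R]

theorem exists_monomial_eq_C_mul_X_mul_X_mul_X {d : σ →₀ ℕ} (hd : d.degree = 3) (r : R) :
    ∃ i j k, monomial d r = C r * (X i * X j * X k) := by
  classical
  obtain ⟨i, j, k, hijk⟩ := Multiset.card_eq_three.mp (d.card_toMultiset.trans hd)
  have hd : d = Finsupp.single i 1 + Finsupp.single j 1 + Finsupp.single k 1 := by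
    rw [← d.toMultiset_toFinsupp, hijk]
    simp only [Multiset.insert_eq_cons, ← Multiset.singleton_add, Multiset.toFinsupp_add,
      Multiset.toFinsupp_singleton, add_assoc]
  refine ⟨i, j, k, ?_⟩
  rw [hd, monomial_add_single, monomial_add_single, ← C_mul_X_eq_monomial]
  ring

variable [Fintype σ]

noncomputable def directionalDeriv (p : MvPolynomial σ R) (a b : σ → R) : R :=
  ∑ i, eval a (pderiv i p) * b i

section

variable (a b : σ → R)

@[simp]
theorem directionalDeriv_add (p q : MvPolynomial σ R) :
    directionalDeriv (p + q) a b = directionalDeriv p a b + directionalDeriv q a b := by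
  simp only [directionalDeriv, map_add, add_mul, Finset.sum_add_distrib]

@[simp]
theorem directionalDeriv_mul (p q : MvPolynomial σ R) :
    directionalDeriv (p * q) a b =
      eval a p * directionalDeriv q a b + eval a q * directionalDeriv p a b := by
  simp only [directionalDeriv, Derivation.leibniz, smul_eq_mul, map_add, map_mul, add_mul,
    Finset.sum_add_distrib, mul_assoc, ← Finset.mul_sum]

@[simp]
theorem directionalDeriv_C (r : R) : directionalDeriv (C r : MvPolynomial σ R) a b = 0 := by
  simp [directionalDeriv]

@[simp]
theorem directionalDeriv_X (i : σ) : directionalDeriv (X i : MvPolynomial σ R) a b = b i := by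
  classical
  simp [directionalDeriv, pderiv_X, Pi.single_apply]

end

theorem eval_smul_add_smul_of_isHomogeneous_three {p : MvPolynomial σ R} (hp : p.IsHomogeneous 3)
    (a b : σ → R) (s t : R) :
    eval (s • a + t • b) p =
      s ^ 3 * eval a p + s ^ 2 * t * directionalDeriv p a b
        + s * t ^ 2 * directionalDeriv p b a + t ^ 3 * eval b p := by
  induction hp using IsWeightedHomogeneous.induction_on with
  | zero => simp [directionalDeriv]
  | add p q _ _ hp hq => simp only [map_add, directionalDeriv_add, hp, hq]; ring
  | monomial d r hd =>
    obtain ⟨i, j, k, hijk⟩ := exists_monomial_eq_C_mul_X_mul_X_mul_X (R := R)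
      (by rwa [Finsupp.degree_eq_weight_one]) r
    simp only [hijk, directionalDeriv_mul, directionalDeriv_C, directionalDeriv_X, eval_mul,
      eval_C, eval_X, Pi.add_apply, Pi.smul_apply, smul_eq_mul]
    ring

end MvPolynomial

open MvPolynomial

theorem cubic_polarization_general {K : Type*} [Field K] {m : ℕ}
    (F : MvPolynomial (Fin m) K) (hF : F.IsHomogeneous 3)
    (u x : Fin m → K)
    (hu : MvPolynomial.eval u F = 0) (hx : MvPolynomial.eval x F = 0) :
    ∀ s t : K,
      MvPolynomial.eval (s • u + t • x) F =
        s * t * (s * (∑ i, MvPolynomial.eval u (MvPolynomial.pderiv i F) * x i)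
          + t * (∑ i, MvPolynomial.eval x (MvPolynomial.pderiv i F) * u i)) := by
  intro s t
  rw [eval_smul_add_smul_of_isHomogeneous_three hF, hu, hx, directionalDeriv, directionalDeriv]
  ring

/-- Cubic polarization identity: if `F` is a homogeneous cubic with `F(u) = F(x) = 0`,
then `F(s•u + t•x) = s*t*(s*(∇F(u)·x) + t*(∇F(x)·u))`. -/
theorem cubic_polarization {K : Type*} [Field K] [CharZero K] {m : ℕ} (hm : 1 ≤ m)
    (F : MvPolynomial (Fin m) K) (hF : F.IsHomogeneous 3)
    (u x : Fin m → K)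
    (hu : MvPolynomial.eval u F = 0) (hx : MvPolynomial.eval x F = 0) :
    ∀ s t : K,
      MvPolynomial.eval (s • u + t • x) F =
        s * t * (s * (∑ i, MvPolynomial.eval u (MvPolynomial.pderiv i F) * x i)
          + t * (∑ i, MvPolynomial.eval x (MvPolynomial.pderiv i F) * u i)) :=
  cubic_polarization_general F hF u x hu hx
end

section
/- Let u, x : Fin m → K satisfy F(u) = 0 and F(x) = 0. Then (∇F(u)·x = 0 and ∇F(x)·u = 0) holds if and only if F(s•u + t•x) = 0 for all s, t ∈ K. (Lemma 3.4 of the paper in cone coordinates: for a cubic hypersurface X = {F = 0} and a point [u] ∈ X, the intersection S_u ∩ S_u* of the hyperplane section S_u = 𝕋_{[u]}X ∩ X with the locus S_u* = { [x] ∈ X : [u] ∈ 𝕋_{[x]}X } equals the union C_u of lines on X through [u]; equivalently, a line bitangent to a cubic hypersurface is contained in it.) -/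
/-!
Restrict the cubic `F` to the line through `u` in direction `x`: `q(t) = F(u + t x)` has degree
at most three, its constant and linear coefficients are `F(u)` and `∇F(u)·x`, and homogeneity
gives `q(t) = t³ F(x + t⁻¹ u)`, so `q` is the reversal of `t ↦ F(x + t u)` and its other two
coefficients are `∇F(x)·u` and `F(x)`. Hence
`F(s u + t x) = s³ F(u) + s² t ∇F(u)·x + s t² ∇F(x)·u + t³ F(x)`, and when `F(u) = F(x) = 0` this
binary cubic vanishes identically iff its two middle coefficients do.
-/

open MvPolynomial

namespace MvPolynomial

section CommSemiring

variable {R σ : Type*} [CommSemiring R]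

theorem IsHomogeneous.eval_smul {F : MvPolynomial σ R} {n : ℕ} (hF : F.IsHomogeneous n)
    (c : R) (v : σ → R) : eval (c • v) F = c ^ n * eval v F := by
  rw [eval_eq, eval_eq, Finset.mul_sum]
  refine Finset.sum_congr rfl fun d hd => ?_
  have hdeg : ∑ i ∈ d.support, d i = n := by
    simpa [Finsupp.weight_apply, Finsupp.sum] using hF (mem_support_iff.mp hd)
  simp only [Pi.smul_apply, smul_eq_mul, mul_pow, Finset.prod_mul_distrib,
    Finset.prod_pow_eq_pow_sum, hdeg]
  ring

noncomputable def restrictToLine (F : MvPolynomial σ R) (v w : σ → R) : Polynomial R :=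
  aeval (fun i => Polynomial.C (v i) + Polynomial.C (w i) * Polynomial.X) F

theorem eval_restrictToLine (F : MvPolynomial σ R) (v w : σ → R) (t : R) :
    (restrictToLine F v w).eval t = eval (v + t • w) F := by
  rw [restrictToLine, ← Polynomial.coe_aeval_eq_eval, ← AlgHom.comp_apply, comp_aeval]
  change aeval _ F = aeval (v + t • w) F
  congr 2
  funext i
  simp only [map_add, map_mul, Polynomial.aeval_C, Polynomial.aeval_X, Algebra.algebraMap_self,
    RingHom.id_apply, Pi.add_apply, Pi.smul_apply, smul_eq_mul]
  ring

theorem coeff_restrictToLine_zero (F : MvPolynomial σ R) (v w : σ → R) :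
    (restrictToLine F v w).coeff 0 = eval v F := by
  simp [Polynomial.coeff_zero_eq_eval_zero, eval_restrictToLine]

theorem IsHomogeneous.natDegree_restrictToLine_le {F : MvPolynomial σ R} {n : ℕ}
    (hF : F.IsHomogeneous n) (v w : σ → R) : (restrictToLine F v w).natDegree ≤ n := by
  simpa [restrictToLine] using aeval_natDegree_le (n := 1) F hF.totalDegree_le _ fun i =>
    (Polynomial.natDegree_add_le _ _).trans <| max_le (by simp)
      ((Polynomial.natDegree_C_mul_le _ _).trans Polynomial.natDegree_X_le)

variable [Fintype σ]

theorem derivative_aeval (φ : σ → Polynomial R) (F : MvPolynomial σ R) :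
    Polynomial.derivative (aeval φ F) =
      ∑ i, aeval φ (pderiv i F) * Polynomial.derivative (φ i) := by
  classical
  induction F using MvPolynomial.induction_on with
  | C a => simp
  | add p q hp hq => simp [hp, hq, add_mul, Finset.sum_add_distrib]
  | mul_X p j hp =>
    simp only [map_mul, aeval_X, Polynomial.derivative_mul, hp, pderiv_mul, map_add, add_mul,
      Finset.sum_add_distrib, Finset.sum_mul]
    refine congrArg₂ (· + ·) ?_ ?_
    · exact Finset.sum_congr rfl fun i _ => by ring
    · rw [Finset.sum_eq_single j (fun i _ hij => by simp [Pi.single_eq_of_ne hij.symm]) (by simp)]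
      simp

theorem coeff_restrictToLine_one (F : MvPolynomial σ R) (v w : σ → R) :
    (restrictToLine F v w).coeff 1 = ∑ i, eval v (pderiv i F) * w i := by
  have hcoeff : (restrictToLine F v w).coeff 1 =
      (Polynomial.derivative (restrictToLine F v w)).eval 0 := by
    simp [← Polynomial.coeff_zero_eq_eval_zero, Polynomial.coeff_derivative]
  rw [hcoeff, restrictToLine, derivative_aeval]
  simp only [Polynomial.derivative_add, Polynomial.derivative_C, Polynomial.derivative_C_mul_X,
    zero_add, Polynomial.eval_finsetSum, Polynomial.eval_mul, Polynomial.eval_C]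
  refine Finset.sum_congr rfl fun i _ => ?_
  have hpoint := eval_restrictToLine (pderiv i F) v w 0
  rw [zero_smul, add_zero, restrictToLine] at hpoint
  rw [hpoint]

end CommSemiring

section Field

variable {K σ : Type*} [Field K]

/-- Homogeneity gives `F(v + t w) = tⁿ F(w + t⁻¹ v)` for `t ≠ 0`. -/
theorem IsHomogeneous.restrictToLine_eq_reflect [Infinite K] {F : MvPolynomial σ K} {n : ℕ}
    (hF : F.IsHomogeneous n) (v w : σ → K) :
    restrictToLine F v w = Polynomial.reflect n (restrictToLine F w v) := by
  refine Polynomial.eq_of_infinite_eval_eq _ _ <|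
    (Set.finite_singleton (0 : K)).infinite_compl.mono fun t (ht : t ≠ 0) => ?_
  have : Invertible t⁻¹ := invertibleOfNonzero (inv_ne_zero ht)
  have hreflect := Polynomial.eval₂_reflect_mul_pow (RingHom.id K) t⁻¹ n
    (restrictToLine F w v) (hF.natDegree_restrictToLine_le w v)
  rw [invOf_eq_inv, inv_inv] at hreflect
  have hline : v + t • w = t • (w + t⁻¹ • v) := by
    rw [smul_add, smul_smul, mul_inv_cancel₀ ht, one_smul, add_comm]
  change Polynomial.eval t _ * t⁻¹ ^ n = Polynomial.eval t⁻¹ _ at hreflect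
  change Polynomial.eval t _ = Polynomial.eval t _
  rw [eval_restrictToLine, hline, hF.eval_smul, ← eval_restrictToLine, ← hreflect, mul_left_comm,
    ← mul_pow, mul_inv_cancel₀ ht, one_pow, mul_one]

theorem IsHomogeneous.eval_add_smul_of_degree_three [Infinite K] [Fintype σ]
    {F : MvPolynomial σ K} (hF : F.IsHomogeneous 3) (v w : σ → K) (t : K) :
    eval (v + t • w) F = eval v F + t * ∑ i, eval v (pderiv i F) * w i +
      t ^ 2 * ∑ i, eval w (pderiv i F) * v i + t ^ 3 * eval w F := by
  have hcoeff (k : ℕ) (hk : k ≤ 3) :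
      (restrictToLine F v w).coeff k = (restrictToLine F w v).coeff (3 - k) := by
    rw [hF.restrictToLine_eq_reflect, Polynomial.coeff_reflect, Polynomial.revAt_le hk]
  rw [← eval_restrictToLine, Polynomial.eval_eq_sum_range' (n := 4)
    (Nat.lt_succ_of_le (hF.natDegree_restrictToLine_le v w))]
  simp only [Finset.sum_range_succ, Finset.sum_range_zero, hcoeff 2 (by norm_num),
    hcoeff 3 (by norm_num), Nat.reduceSub]
  rw [coeff_restrictToLine_zero, coeff_restrictToLine_zero, coeff_restrictToLine_one,
    coeff_restrictToLine_one]
  ring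

theorem IsHomogeneous.eval_smul_add_smul_of_degree_three [Infinite K] [Fintype σ]
    {F : MvPolynomial σ K} (hF : F.IsHomogeneous 3) (v w : σ → K) (s t : K) :
    eval (s • v + t • w) F = s ^ 3 * eval v F + s ^ 2 * t * ∑ i, eval v (pderiv i F) * w i +
      s * t ^ 2 * ∑ i, eval w (pderiv i F) * v i + t ^ 3 * eval w F := by
  rcases eq_or_ne s 0 with rfl | hs
  · simp [hF.eval_smul]
  · have hplane : s • v + t • w = s • (v + (t / s) • w) := by
      rw [smul_add, smul_smul, mul_div_cancel₀ t hs]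
    rw [hplane, hF.eval_smul, hF.eval_add_smul_of_degree_three]
    field_simp

end Field

end MvPolynomial

theorem bitangent_line_in_cubic_general {K : Type*} [Field K] [CharZero K] {m : ℕ}
    (F : MvPolynomial (Fin m) K) (hF : F.IsHomogeneous 3)
    (u x : Fin m → K)
    (hu : MvPolynomial.eval u F = 0) (hx : MvPolynomial.eval x F = 0) :
    ((∑ i, MvPolynomial.eval u (MvPolynomial.pderiv i F) * x i) = 0 ∧
      (∑ i, MvPolynomial.eval x (MvPolynomial.pderiv i F) * u i) = 0) ↔
      ∀ s t : K, MvPolynomial.eval (s • u + t • x) F = 0 := by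
  simp only [hF.eval_smul_add_smul_of_degree_three, hu, hx, mul_zero, add_zero, zero_add]
  set a := ∑ i, eval u (pderiv i F) * x i
  set b := ∑ i, eval x (pderiv i F) * u i
  constructor
  · rintro ⟨ha, hb⟩ s t
    rw [ha, hb]
    ring
  · intro h
    have hsum : a + b = 0 := by simpa using h 1 1
    have hdiff : -a + b = 0 := by simpa using h 1 (-1)
    have hb : b = 0 := (mul_eq_zero.mp (show (2 : K) * b = 0 by
      linear_combination hsum + hdiff)).resolve_left two_ne_zero
    exact ⟨by linear_combination hsum - hb, hb⟩

/-- A line bitangent to a cubic hypersurface is contained in it: for `F(u) = F(x) = 0`,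
`∇F(u)·x = 0` and `∇F(x)·u = 0` hold iff `F` vanishes on the plane spanned by `u, x`. -/
theorem bitangent_line_in_cubic {K : Type*} [Field K] [CharZero K] {m : ℕ} (hm : 1 ≤ m)
    (F : MvPolynomial (Fin m) K) (hF : F.IsHomogeneous 3)
    (u x : Fin m → K)
    (hu : MvPolynomial.eval u F = 0) (hx : MvPolynomial.eval x F = 0) :
    ((∑ i, MvPolynomial.eval u (MvPolynomial.pderiv i F) * x i) = 0 ∧
      (∑ i, MvPolynomial.eval x (MvPolynomial.pderiv i F) * u i) = 0) ↔
      ∀ s t : K, MvPolynomial.eval (s • u + t • x) F = 0 :=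
  bitangent_line_in_cubic_general F hF u x hu hx
end

section
/- Let u, x : Fin m → K satisfy F(u) = 0 and F(x) = 0, and set y := (∇F(x)·u) • u − (∇F(u)·x) • x. Then one has the identity (∇F(y)·u) • u − (∇F(u)·y) • y = −((∇F(u)·x)^3) • x. In particular, if ∇F(u)·x ≠ 0 then applying the map x ↦ y(u,x) twice returns a nonzero scalar multiple of x. (Corollary 3.6(c) of the paper: τ_u restricts to a biregular involution of X ∖ S_u, where S_u = 𝕋_{[u]}X ∩ X.) -/
/-!
Write `D(v, w) = ∇F(v)·w`, `P = D(u, x)` and `Q = D(x, u)`, so that `y = Q u - P x`.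
Euler's identity gives `D(u, u) = 3 F(u) = 0`, hence `D(u, y) = -P²`. Expanding the quadrics
`∂ᵢF` along the line and applying Euler's identity to the gradient (`∑ᵢ ∂ᵢ∂ⱼF(u) uᵢ = 2 ∂ⱼF(u)`)
gives `D(a u + b x, u) = a² D(u, u) + 2ab D(u, x) + b² D(x, u)`, so `D(y, u) = -P² Q`, and then
`D(y, u) u - D(u, y) y = -P² Q u + P² (Q u - P x) = -P³ x`.
-/

open Finset

namespace MvPolynomial

variable {R σ : Type*} [CommSemiring R]

theorem pderiv_pderiv_comm (i j : σ) (p : MvPolynomial σ R) :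
    pderiv i (pderiv j p) = pderiv j (pderiv i p) := by
  classical
  induction p using MvPolynomial.induction_on with
  | C a => simp
  | add p q hp hq => simp [hp, hq]
  | mul_X p k hp =>
    have hX : ∀ a b : σ, pderiv a (pderiv b (X k : MvPolynomial σ R)) = 0 := fun a b => by
      rw [pderiv_X]; by_cases h : b = k <;> simp [h]
    simp only [pderiv_mul, map_add, hX, hp]
    ring

theorem IsHomogeneous.eval_eq_of_zero {p : MvPolynomial σ R} (hp : p.IsHomogeneous 0)
    (v w : σ → R) : eval v p = eval w p := by
  rw [← totalDegree_zero_iff_isHomogeneous, totalDegree_eq_zero_iff_eq_C] at hp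
  rw [hp, eval_C, eval_C]

variable [Fintype σ]

noncomputable def dirDeriv (p : MvPolynomial σ R) (v w : σ → R) : R :=
  ∑ i, eval v (pderiv i p) * w i

theorem dirDeriv_smul_add_smul (p : MvPolynomial σ R) (v w w' : σ → R) (a b : R) :
    dirDeriv p v (a • w + b • w') = a * dirDeriv p v w + b * dirDeriv p v w' := by
  simp only [dirDeriv, Pi.add_apply, Pi.smul_apply, smul_eq_mul, mul_add, mul_sum,
    sum_add_distrib]
  congr 1 <;> exact sum_congr rfl fun _ _ => by ring

theorem dirDeriv_add (p q : MvPolynomial σ R) (v w : σ → R) :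
    dirDeriv (p + q) v w = dirDeriv p v w + dirDeriv q v w := by
  simp only [dirDeriv, map_add, add_mul, sum_add_distrib]

theorem dirDeriv_mul (p q : MvPolynomial σ R) (v w : σ → R) :
    dirDeriv (p * q) v w = eval v p * dirDeriv q v w + eval v q * dirDeriv p v w := by
  simp only [dirDeriv, Derivation.leibniz, smul_eq_mul, map_add, map_mul, add_mul,
    sum_add_distrib, mul_sum]
  congr 1 <;> exact sum_congr rfl fun _ _ => by ring

theorem IsHomogeneous.dirDeriv_self {p : MvPolynomial σ R} {n : ℕ} (hp : p.IsHomogeneous n)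
    (v : σ → R) : dirDeriv p v v = n * eval v p := by
  simpa [dirDeriv, mul_comm] using congrArg (eval v) hp.sum_X_mul_pderiv

theorem IsHomogeneous.dirDeriv_of_one {r : MvPolynomial σ R} (hr : r.IsHomogeneous 1)
    (v w : σ → R) : dirDeriv r v w = eval w r := by
  have hconst : dirDeriv r v w = dirDeriv r w w :=
    sum_congr rfl fun i _ => by rw [hr.pderiv.eval_eq_of_zero v w]
  rw [hconst, hr.dirDeriv_self, Nat.cast_one, one_mul]

theorem IsHomogeneous.eval_smul_add_smul_of_one {r : MvPolynomial σ R} (hr : r.IsHomogeneous 1)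
    (v w : σ → R) (a b : R) : eval (a • v + b • w) r = a * eval v r + b * eval w r := by
  simp only [← hr.dirDeriv_of_one 0, dirDeriv_smul_add_smul]

theorem IsHomogeneous.eval_smul_add_smul_of_two {q : MvPolynomial σ R} (hq : q.IsHomogeneous 2)
    (v w : σ → R) (a b : R) :
    eval (a • v + b • w) q = a ^ 2 * eval v q + a * b * dirDeriv q v w + b ^ 2 * eval w q := by
  -- a quadratic form is a sum of products of two linear forms
  rw [← mem_homogeneousSubmodule, ← homogeneousSubmodule_one_pow, pow_two] at hq
  refine Submodule.mul_induction_on hq (fun r hr s hs => ?_) fun p q hp hq => ?_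
  · rw [mem_homogeneousSubmodule] at hr hs
    rw [eval_mul, eval_mul, eval_mul, hr.eval_smul_add_smul_of_one,
      hs.eval_smul_add_smul_of_one, dirDeriv_mul, hr.dirDeriv_of_one, hs.dirDeriv_of_one]
    ring
  · rw [map_add, map_add, map_add, hp, hq, dirDeriv_add]
    ring

theorem IsHomogeneous.sum_dirDeriv_pderiv_mul_self {p : MvPolynomial σ R} {n : ℕ}
    (hp : p.IsHomogeneous (n + 1)) (v w : σ → R) :
    ∑ i, dirDeriv (pderiv i p) v w * v i = n * dirDeriv p v w := by
  simp only [dirDeriv, sum_mul, mul_sum]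
  rw [sum_comm]
  refine sum_congr rfl fun j _ => ?_
  have hj : (pderiv j p).IsHomogeneous n := hp.pderiv
  rw [← mul_assoc, ← hj.dirDeriv_self, dirDeriv, sum_mul]
  exact sum_congr rfl fun i _ => by rw [pderiv_pderiv_comm]; ring

theorem IsHomogeneous.dirDeriv_smul_add_smul_of_three {F : MvPolynomial σ R}
    (hF : F.IsHomogeneous 3) (v w : σ → R) (a b : R) :
    dirDeriv F (a • v + b • w) v =
      a ^ 2 * dirDeriv F v v + 2 * a * b * dirDeriv F v w + b ^ 2 * dirDeriv F w v := by
  have hF' : ∀ i, (pderiv i F).IsHomogeneous 2 := fun i => hF.pderiv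
  calc dirDeriv F (a • v + b • w) v
      = ∑ i, (a ^ 2 * eval v (pderiv i F) + a * b * dirDeriv (pderiv i F) v w
          + b ^ 2 * eval w (pderiv i F)) * v i :=
        sum_congr rfl fun i _ => by rw [(hF' i).eval_smul_add_smul_of_two]
    _ = a ^ 2 * dirDeriv F v v + a * b * ∑ i, dirDeriv (pderiv i F) v w * v i
          + b ^ 2 * dirDeriv F w v := by
        simp only [add_mul, sum_add_distrib, mul_assoc, ← mul_sum]
        rfl
    _ = _ := by
        rw [hF.sum_dirDeriv_pderiv_mul_self]
        push_cast
        ring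

end MvPolynomial

open MvPolynomial

noncomputable def thirdIntersection {R σ : Type*} [CommRing R] [Fintype σ]
    (F : MvPolynomial σ R) (u x : σ → R) : σ → R :=
  dirDeriv F x u • u - dirDeriv F u x • x

theorem thirdIntersection_thirdIntersection {R σ : Type*} [CommRing R] [Fintype σ]
    {F : MvPolynomial σ R} (hF : F.IsHomogeneous 3) {u : σ → R} (hu : eval u F = 0)
    (x : σ → R) :
    thirdIntersection F u (thirdIntersection F u x) = (-dirDeriv F u x ^ 3) • x := by
  set y := thirdIntersection F u x with hy
  have huu : dirDeriv F u u = 0 := by rw [hF.dirDeriv_self, hu, mul_zero]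
  have hy' : y = dirDeriv F x u • u + (-dirDeriv F u x) • x := by
    rw [hy, thirdIntersection, neg_smul, sub_eq_add_neg]
  have hyu : dirDeriv F y u = -(dirDeriv F u x ^ 2 * dirDeriv F x u) := by
    rw [hy', hF.dirDeriv_smul_add_smul_of_three, huu]
    ring
  have huy : dirDeriv F u y = -dirDeriv F u x ^ 2 := by
    rw [hy', dirDeriv_smul_add_smul, huu]
    ring
  rw [thirdIntersection, hyu, huy, hy, thirdIntersection]
  module

theorem tau_u_involution_general {K : Type*} [Field K] {m : ℕ}
    (F : MvPolynomial (Fin m) K) (hF : F.IsHomogeneous 3)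
    (u x y : Fin m → K)
    (hu : MvPolynomial.eval u F = 0)
    (hy : y = (∑ i, MvPolynomial.eval x (MvPolynomial.pderiv i F) * u i) • u -
        (∑ i, MvPolynomial.eval u (MvPolynomial.pderiv i F) * x i) • x) :
    (∑ i, MvPolynomial.eval y (MvPolynomial.pderiv i F) * u i) • u -
        (∑ i, MvPolynomial.eval u (MvPolynomial.pderiv i F) * y i) • y =
      (-((∑ i, MvPolynomial.eval u (MvPolynomial.pderiv i F) * x i) ^ 3)) • x ∧
    ((∑ i, MvPolynomial.eval u (MvPolynomial.pderiv i F) * x i) ≠ 0 →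
      ∃ c : K, c ≠ 0 ∧
        (∑ i, MvPolynomial.eval y (MvPolynomial.pderiv i F) * u i) • u -
          (∑ i, MvPolynomial.eval u (MvPolynomial.pderiv i F) * y i) • y = c • x) := by
  have hy : y = thirdIntersection F u x := hy
  have key : thirdIntersection F u y = (-dirDeriv F u x ^ 3) • x := by
    rw [hy, thirdIntersection_thirdIntersection hF hu]
  exact ⟨key, fun hP => ⟨_, neg_ne_zero.mpr (pow_ne_zero 3 hP), key⟩⟩

/-- `τ_u` is an involution off the hyperplane section `S_u`: with
`y := (∇F(x)·u) • u − (∇F(u)·x) • x` one has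
`(∇F(y)·u) • u − (∇F(u)·y) • y = −((∇F(u)·x)^3) • x`; in particular, if `∇F(u)·x ≠ 0`
then applying `x ↦ y(u,x)` twice returns a nonzero scalar multiple of `x`. -/
theorem tau_u_involution {K : Type*} [Field K] [CharZero K] {m : ℕ} (hm : 1 ≤ m)
    (F : MvPolynomial (Fin m) K) (hF : F.IsHomogeneous 3)
    (u x y : Fin m → K)
    (hu : MvPolynomial.eval u F = 0) (hx : MvPolynomial.eval x F = 0)
    (hy : y = (∑ i, MvPolynomial.eval x (MvPolynomial.pderiv i F) * u i) • u -
        (∑ i, MvPolynomial.eval u (MvPolynomial.pderiv i F) * x i) • x) :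
    (∑ i, MvPolynomial.eval y (MvPolynomial.pderiv i F) * u i) • u -
        (∑ i, MvPolynomial.eval u (MvPolynomial.pderiv i F) * y i) • y =
      (-((∑ i, MvPolynomial.eval u (MvPolynomial.pderiv i F) * x i) ^ 3)) • x ∧
    ((∑ i, MvPolynomial.eval u (MvPolynomial.pderiv i F) * x i) ≠ 0 →
      ∃ c : K, c ≠ 0 ∧
        (∑ i, MvPolynomial.eval y (MvPolynomial.pderiv i F) * u i) • u -
          (∑ i, MvPolynomial.eval u (MvPolynomial.pderiv i F) * y i) • y = c • x) :=
  tau_u_involution_general F hF u x y hu hy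
end
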